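/- Let a ≥ b > 0 and f(t,x) = M(a+it,b,x)M(a-it,b,x). Then f satisfies the fourth-order linear ODE in x: -4t²x·f + Σ_{k=0}^4 p_k(x)·∂ₓᵏf = 0, where p₀(x) = -2a(1-3b+2b²)-2a(1-4b)x-4ax², p₁(x) = b-3b²+2b³+(2a+b-8ab-6b²)x+(2+8a+6b)x²-2x³, p₂(x) = (5b²-b)x+(-3-4a-10b)x²+5x³, p₃(x) = (1+4b)x²-4x³, p₄(x) = x³. -/

import Mathlib

open Complex

/-- The Kummer confluent hypergeometric function `M(z,b,x)` with complex first
parameter. -/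
noncomputable def kummerM (z : ℂ) (b x : ℝ) : ℂ :=
  ∑' n : ℕ, (ascPochhammer ℂ n).eval z /
    ((ascPochhammer ℂ n).eval (b : ℂ) * (n.factorial : ℂ)) * (x : ℂ) ^ n

/-!
Termwise differentiation gives `M'(z,b,x) = (z/b) M(z+1,b+1,x)`, so `M(z,b,·)` is smooth, and
comparing coefficients shows that it solves Kummer's equation `x u'' + (b - x) u' - z u = 0`.
Differentiating that equation, `u⁽ᵏ⁾` solves Kummer's equation with parameters `(z+k, b+k)`.
For `f = u v` with `u, v` solutions for `z = a ± it`, Leibniz' rule writes `f', …, f''''` in the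
jets of `u` and `v`. The equations for `u, u', u''` let one rewrite `x u''`, `x² u'''`, `x³ u''''`
(and likewise for `v`) in terms of `u, u'` without dividing by `x`; after this substitution the
claimed combination vanishes identically, because `(a + it)(a - it) = a² + t²`.
-/

open scoped ContDiff

theorem ascPochhammer_succ_eval_left {S : Type*} [CommSemiring S] (n : ℕ) (s : S) :
    (ascPochhammer S (n + 1)).eval s = s * (ascPochhammer S n).eval (s + 1) := by
  simp [ascPochhammer_succ_left]

theorem hasDerivAt_tsum_mul_pow {c : ℕ → ℂ}
    (hc : ∀ r : ℝ, 0 ≤ r → Summable fun n => ‖c n‖ * (n + 1) * r ^ n) (x : ℝ) :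
    HasDerivAt (fun y : ℝ => ∑' n, c n * (y : ℂ) ^ n)
      (∑' n, (n + 1) * c (n + 1) * (x : ℂ) ^ n) x := by
  set R := |x| + 1
  have hR : 1 ≤ R := by simp [R]
  have hx : x ∈ Metric.ball (0 : ℝ) R := by simp [R]
  have hbound : ∀ n (y : ℝ), y ∈ Metric.ball (0 : ℝ) R →
      ‖c n * (n * (y : ℂ) ^ (n - 1))‖ ≤ ‖c n‖ * (n + 1) * R ^ n := by
    intro n y hy
    rw [mem_ball_zero_iff, Real.norm_eq_abs] at hy
    rw [norm_mul, norm_mul, norm_pow, norm_real, Real.norm_eq_abs, norm_natCast, mul_assoc]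
    gcongr
    · linarith
    · calc |y| ^ (n - 1) ≤ R ^ (n - 1) := by gcongr
        _ ≤ R ^ n := pow_le_pow_right₀ hR (n.sub_le 1)
  have hderiv := hasDerivAt_tsum_of_isPreconnected (hc R (by positivity)) Metric.isOpen_ball
    (convex_ball 0 R).isPreconnected (g := fun n (y : ℝ) => c n * (y : ℂ) ^ n)
    (g' := fun n (y : ℝ) => c n * (n * (y : ℂ) ^ (n - 1)))
    (fun n y _ => ((hasDerivAt_pow n (y : ℂ)).comp_ofReal).const_mul (c n)) hbound
    (Metric.mem_ball_self (by positivity)) ((hasSum_single 0 (by simp +contextual)).summable) hx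
  rw [(Summable.of_norm_bounded (hc R (by positivity)) (hbound · x hx)).tsum_eq_zero_add]
    at hderiv
  refine hderiv.congr_deriv ?_
  simp only [CharP.cast_eq_zero, zero_mul, mul_zero, zero_add]
  exact tsum_congr fun n => by push_cast; ring

theorem HasSum.natCast_mul_of_derivCoeff {c d : ℕ → ℂ}
    (hcd : ∀ n : ℕ, (n + 1) * c (n + 1) = d n) {x s : ℂ}
    (h : HasSum (fun n => d n * x ^ n) s) :
    HasSum (fun n => n * c n * x ^ n) (x * s) := by
  rw [← hasSum_nat_add_iff' 1]
  simpa [← hcd, pow_succ, mul_assoc, mul_comm x, mul_left_comm x] using h.mul_left x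

noncomputable def kummerCoeff (z b : ℂ) (n : ℕ) : ℂ :=
  (ascPochhammer ℂ n).eval z / ((ascPochhammer ℂ n).eval b * n.factorial)

theorem kummerM_eq_tsum (z : ℂ) (b x : ℝ) :
    kummerM z b x = ∑' n, kummerCoeff z b n * (x : ℂ) ^ n := rfl

theorem kummerCoeff_succ (z b : ℂ) (n : ℕ) :
    kummerCoeff z b (n + 1) = kummerCoeff z b n * (z + n) / ((b + n) * (n + 1)) := by
  simp only [kummerCoeff, ascPochhammer_succ_eval, Nat.factorial_succ]
  push_cast
  simp only [div_eq_mul_inv, mul_inv]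
  ring

theorem natCast_add_one_mul_kummerCoeff_succ (z b : ℂ) (n : ℕ) :
    (n + 1) * kummerCoeff z b (n + 1) = z / b * kummerCoeff (z + 1) (b + 1) n := by
  simp only [kummerCoeff, ascPochhammer_succ_eval_left, Nat.factorial_succ, div_eq_mul_inv,
    mul_inv]
  push_cast
  field_simp

theorem norm_kummerCoeff_le {b : ℝ} (hb : 0 < b) (z : ℂ) (n : ℕ) :
    ‖kummerCoeff z b n‖ ≤ (1 + ‖z‖ / b) ^ n / n.factorial := by
  induction n with
  | zero => simp [kummerCoeff]
  | succ n ih =>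
    have hnum : ‖z + n‖ ≤ (1 + ‖z‖ / b) * (b + n) := by
      have : ‖z‖ ≤ ‖z‖ / b * (b + n) := by
        rw [div_mul_eq_mul_div, le_div_iff₀ hb]
        nlinarith [norm_nonneg z, n.cast_nonneg (α := ℝ)]
      calc ‖z + n‖ ≤ ‖z‖ + n := by simpa using norm_add_le z (n : ℂ)
        _ ≤ (1 + ‖z‖ / b) * (b + n) := by linarith
    have hratio : ‖z + n‖ / ((b + n) * (n + 1)) ≤ (1 + ‖z‖ / b) / (n + 1) := by
      calc ‖z + n‖ / ((b + n) * (n + 1))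
          ≤ (1 + ‖z‖ / b) * (b + n) / ((b + n) * (n + 1)) := by gcongr
        _ = (1 + ‖z‖ / b) / (n + 1) := by field_simp
    have hden : ‖((b : ℂ) + n) * (n + 1)‖ = (b + n) * (n + 1) := by
      rw [show ((b : ℂ) + n) * (n + 1) = (((b + n) * (n + 1) : ℝ) : ℂ) by push_cast; ring,
        norm_real, Real.norm_of_nonneg (by positivity)]
    calc ‖kummerCoeff z b (n + 1)‖
        = ‖kummerCoeff z b n‖ * (‖z + n‖ / ((b + n) * (n + 1))) := by
          rw [kummerCoeff_succ, mul_div_assoc, norm_mul, norm_div, hden]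
      _ ≤ (1 + ‖z‖ / b) ^ n / n.factorial * ((1 + ‖z‖ / b) / (n + 1)) := by gcongr
      _ = (1 + ‖z‖ / b) ^ (n + 1) / (n + 1).factorial := by
          rw [pow_succ, Nat.factorial_succ, Nat.cast_mul, mul_comm ((n + 1 : ℕ) : ℝ),
            div_mul_div_comm]
          push_cast
          ring

theorem summable_norm_kummerCoeff_mul {b : ℝ} (hb : 0 < b) (z : ℂ) {r : ℝ} (hr : 0 ≤ r) :
    Summable fun n => ‖kummerCoeff z b n‖ * (n + 1) * r ^ n := by
  refine .of_nonneg_of_le (fun n => by positivity) (fun n => ?_)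
    (Real.summable_pow_div_factorial (2 * (1 + ‖z‖ / b) * r))
  have h2 : (n + 1 : ℝ) ≤ 2 ^ n := by exact_mod_cast Nat.lt_two_pow_self
  calc ‖kummerCoeff z b n‖ * (n + 1) * r ^ n
      ≤ (1 + ‖z‖ / b) ^ n / n.factorial * 2 ^ n * r ^ n := by
        gcongr
        exact norm_kummerCoeff_le hb z n
    _ = (2 * (1 + ‖z‖ / b) * r) ^ n / n.factorial := by rw [mul_pow, mul_pow]; ring

theorem hasSum_kummerM {b : ℝ} (hb : 0 < b) (z : ℂ) (x : ℝ) :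
    HasSum (fun n => kummerCoeff z b n * (x : ℂ) ^ n) (kummerM z b x) := by
  refine (Summable.of_norm_bounded (summable_norm_kummerCoeff_mul hb z (abs_nonneg x))
    fun n => ?_).hasSum
  rw [norm_mul, norm_pow, norm_real, Real.norm_eq_abs, mul_assoc]
  gcongr
  exact le_mul_of_one_le_left (by positivity) (by simp)

theorem hasDerivAt_kummerM {b : ℝ} (hb : 0 < b) (z : ℂ) (x : ℝ) :
    HasDerivAt (kummerM z b) (z / b * kummerM (z + 1) (b + 1) x) x := by
  refine (hasDerivAt_tsum_mul_pow (fun _ => summable_norm_kummerCoeff_mul hb z) x).congr_deriv ?_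
  simp only [natCast_add_one_mul_kummerCoeff_succ, mul_assoc, tsum_mul_left, kummerM_eq_tsum]
  push_cast
  rfl

theorem deriv_kummerM {b : ℝ} (hb : 0 < b) (z : ℂ) :
    deriv (kummerM z b) = fun x => z / b * kummerM (z + 1) (b + 1) x :=
  funext fun x => (hasDerivAt_kummerM hb z x).deriv

theorem differentiable_kummerM {b : ℝ} (hb : 0 < b) (z : ℂ) :
    Differentiable ℝ (kummerM z b) :=
  fun x => (hasDerivAt_kummerM hb z x).differentiableAt

theorem contDiff_kummerM {b : ℝ} (hb : 0 < b) (z : ℂ) : ContDiff ℝ ∞ (kummerM z b) := by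
  rw [contDiff_infty]
  intro n
  induction n generalizing z b with
  | zero => exact contDiff_zero.2 (differentiable_kummerM hb z).continuous
  | succ n ih =>
    rw [Nat.cast_add_one, contDiff_succ_iff_deriv]
    refine ⟨differentiable_kummerM hb z, by simp, ?_⟩
    rw [deriv_kummerM hb]
    exact contDiff_const.mul (ih (by linarith) (z + 1))

theorem kummerCoeff_contiguous (z : ℂ) {b : ℂ} (n : ℕ) (hbn : b + n ≠ 0) :
    z / b * (n + b) * kummerCoeff (z + 1) (b + 1) n = (n + z) * kummerCoeff z b n := by
  rw [mul_right_comm, ← natCast_add_one_mul_kummerCoeff_succ, kummerCoeff_succ]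
  field_simp
  ring

theorem kummer_jet_reduction {z b x U₀ U₁ U₂ U₃ U₄ : ℂ}
    (h₀ : x * U₂ + (b - x) * U₁ - z * U₀ = 0)
    (h₁ : x * U₃ + (b + 1 - x) * U₂ - (z + 1) * U₁ = 0)
    (h₂ : x * U₄ + (b + 2 - x) * U₃ - (z + 2) * U₂ = 0) :
    x * U₂ = (x - b) * U₁ + z * U₀ ∧
      x ^ 2 * U₃ = (x - b - 1) * ((x - b) * U₁ + z * U₀) + x * (z + 1) * U₁ ∧
      x ^ 3 * U₄ = (x - b - 2) * ((x - b - 1) * ((x - b) * U₁ + z * U₀) + x * (z + 1) * U₁)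
        + x * (z + 2) * ((x - b) * U₁ + z * U₀) := by
  have e₂ : x * U₂ = (x - b) * U₁ + z * U₀ := by linear_combination h₀
  have e₃ : x ^ 2 * U₃ = (x - b - 1) * ((x - b) * U₁ + z * U₀) + x * (z + 1) * U₁ := by
    linear_combination x * h₁ + (x - b - 1) * e₂
  refine ⟨e₂, e₃, ?_⟩
  linear_combination x ^ 2 * h₂ + (x - b - 2) * e₃ + x * (z + 2) * e₂

theorem kummer_product_relation {a b t x U₀ U₁ U₂ U₃ U₄ V₀ V₁ V₂ V₃ V₄ : ℂ}
    (hU₀ : x * U₂ + (b - x) * U₁ - (a + t * I) * U₀ = 0)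
    (hU₁ : x * U₃ + (b + 1 - x) * U₂ - (a + t * I + 1) * U₁ = 0)
    (hU₂ : x * U₄ + (b + 2 - x) * U₃ - (a + t * I + 2) * U₂ = 0)
    (hV₀ : x * V₂ + (b - x) * V₁ - (a - t * I) * V₀ = 0)
    (hV₁ : x * V₃ + (b + 1 - x) * V₂ - (a - t * I + 1) * V₁ = 0)
    (hV₂ : x * V₄ + (b + 2 - x) * V₃ - (a - t * I + 2) * V₂ = 0) :
    -4 * t ^ 2 * x * (U₀ * V₀) +
      (-2 * a * (1 - 3 * b + 2 * b ^ 2) - 2 * a * (1 - 4 * b) * x - 4 * a * x ^ 2) * (U₀ * V₀) +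
      (b - 3 * b ^ 2 + 2 * b ^ 3 + (2 * a + b - 8 * a * b - 6 * b ^ 2) * x
          + (2 + 8 * a + 6 * b) * x ^ 2 - 2 * x ^ 3) * (U₁ * V₀ + U₀ * V₁) +
      ((5 * b ^ 2 - b) * x + (-3 - 4 * a - 10 * b) * x ^ 2 + 5 * x ^ 3) *
        (U₂ * V₀ + 2 * (U₁ * V₁) + U₀ * V₂) +
      ((1 + 4 * b) * x ^ 2 - 4 * x ^ 3) *
        (U₃ * V₀ + 3 * (U₂ * V₁) + 3 * (U₁ * V₂) + U₀ * V₃) +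
      x ^ 3 * (U₄ * V₀ + 4 * (U₃ * V₁) + 6 * (U₂ * V₂) + 4 * (U₁ * V₃) + U₀ * V₄) = 0 := by
  obtain ⟨eU₂, eU₃, eU₄⟩ := kummer_jet_reduction hU₀ hU₁ hU₂
  obtain ⟨eV₂, eV₃, eV₄⟩ := kummer_jet_reduction hV₀ hV₁ hV₂
  linear_combination V₀ * eU₄ + 4 * x * V₁ * eU₃ + 4 * x * U₁ * eV₃ + U₀ * eV₄
    + 6 * x * (x * V₂ * eU₂ + ((x - b) * U₁ + (a + t * I) * U₀) * eV₂)
    + (1 + 4 * b - 4 * x) * (V₀ * eU₃ + 3 * x * V₁ * eU₂ + 3 * x * U₁ * eV₂ + U₀ * eV₃)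
    + ((5 * b ^ 2 - b) + (-3 - 4 * a - 10 * b) * x + 5 * x ^ 2) * (V₀ * eU₂ + U₀ * eV₂)
    - 4 * x * t ^ 2 * U₀ * V₀ * I_sq

def IsKummerSolution (z b : ℂ) (u : ℝ → ℂ) : Prop :=
  ∀ x : ℝ, (x : ℂ) * deriv (deriv u) x + (b - x) * deriv u x - z * u x = 0

theorem isKummerSolution_kummerM {b : ℝ} (hb : 0 < b) (z : ℂ) :
    IsKummerSolution z b (kummerM z b) := by
  intro x
  have hb₁ : (0 : ℝ) < b + 1 := by linarith
  have hM₀ := hasSum_kummerM hb z x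
  have hM₁ := hasSum_kummerM hb₁ (z + 1) x
  have hM₂ := hasSum_kummerM (by linarith : (0 : ℝ) < b + 1 + 1) (z + 1 + 1) x
  push_cast at hM₁ hM₂
  have hxM₁ : HasSum (fun n => n * kummerCoeff z b n * (x : ℂ) ^ n)
      (x * (z / b * kummerM (z + 1) (b + 1) x)) :=
    HasSum.natCast_mul_of_derivCoeff (natCast_add_one_mul_kummerCoeff_succ z b)
      (by simpa only [mul_assoc] using hM₁.mul_left (z / b))
  have hxM₂ : HasSum (fun n => n * kummerCoeff (z + 1) (b + 1) n * (x : ℂ) ^ n)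
      (x * ((z + 1) / (b + 1) * kummerM (z + 1 + 1) (b + 1 + 1) x)) :=
    HasSum.natCast_mul_of_derivCoeff (natCast_add_one_mul_kummerCoeff_succ (z + 1) (b + 1))
      (by simpa only [mul_assoc] using hM₂.mul_left ((z + 1) / (b + 1)))
  -- `x M'' + b M'` and `x M' + z M` are power series with equal coefficients
  have hsum := ((hxM₂.mul_left (z / b)).add (hM₁.mul_left (z / b * b))).sub
    (hxM₁.add (hM₀.mul_left z))
  have hterm : ∀ n : ℕ, z / b * (n * kummerCoeff (z + 1) (b + 1) n * x ^ n)
      + z / b * b * (kummerCoeff (z + 1) (b + 1) n * x ^ n)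
      - (n * kummerCoeff z b n * x ^ n + z * (kummerCoeff z b n * x ^ n)) = 0 := by
    intro n
    have hbn : (b : ℂ) + n ≠ 0 := by exact_mod_cast (by positivity : b + n ≠ 0)
    linear_combination (x : ℂ) ^ n * kummerCoeff_contiguous z n hbn
  simp only [hterm] at hsum
  have hd₁ := (hasDerivAt_kummerM hb z x).deriv
  have hd₂ : deriv (deriv (kummerM z b)) x
      = z / b * ((z + 1) / (b + 1) * kummerM (z + 1 + 1) (b + 1 + 1) x) := by
    rw [deriv_kummerM hb]
    simpa using ((hasDerivAt_kummerM hb₁ (z + 1) x).const_mul (z / b)).deriv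
  rw [hd₁, hd₂]
  linear_combination hsum.unique hasSum_zero

namespace IsKummerSolution

variable {z b : ℂ} {u : ℝ → ℂ}

theorem isKummerSolution_deriv (hu : ContDiff ℝ ∞ u) (h : IsKummerSolution z b u) :
    IsKummerSolution (z + 1) (b + 1) (deriv u) := by
  intro x
  have hdiff : ∀ k, Differentiable ℝ (deriv^[k] u) := fun k =>
    (hu.iterate_deriv k).differentiable (by simp)
  have hx := (hasDerivAt_id x).ofReal_comp
  have hL : HasDerivAt (fun y : ℝ => (y : ℂ) * deriv (deriv u) y
      + (b - y) * deriv u y - z * u y) _ x :=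
    ((hx.mul ((hdiff 2) x).hasDerivAt).add (((hasDerivAt_const x b).sub hx).mul
      ((hdiff 1) x).hasDerivAt)).sub (((hdiff 0) x).hasDerivAt.const_mul z)
  rw [funext h] at hL
  have := hL.unique (hasDerivAt_const x 0)
  simp only [Function.iterate_succ, Function.iterate_zero, Function.comp_apply, id, Pi.sub_apply,
    ofReal_one] at this
  linear_combination this

theorem isKummerSolution_iterate_deriv (hu : ContDiff ℝ ∞ u) (h : IsKummerSolution z b u)
    (k : ℕ) :
    IsKummerSolution (z + k) (b + k) (deriv^[k] u) := by
  induction k with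
  | zero => simpa using h
  | succ k ih =>
    rw [Function.iterate_succ_apply']
    push_cast
    simpa only [add_assoc] using ih.isKummerSolution_deriv (hu.iterate_deriv k)

theorem fourth_order_mul {a b t : ℂ} {u v : ℝ → ℂ} (hu : ContDiff ℝ ∞ u)
    (hv : ContDiff ℝ ∞ v) (hU : IsKummerSolution (a + t * I) b u)
    (hV : IsKummerSolution (a - t * I) b v) (x : ℝ) :
    -4 * t ^ 2 * (x : ℂ) * (u x * v x) +
      (-2 * a * (1 - 3 * b + 2 * b ^ 2) - 2 * a * (1 - 4 * b) * (x : ℂ)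
          - 4 * a * (x : ℂ) ^ 2) * (u x * v x) +
      (b - 3 * b ^ 2 + 2 * b ^ 3 + (2 * a + b - 8 * a * b - 6 * b ^ 2) * (x : ℂ)
          + (2 + 8 * a + 6 * b) * (x : ℂ) ^ 2 - 2 * (x : ℂ) ^ 3) *
        iteratedDeriv 1 (fun x' : ℝ => u x' * v x') x +
      ((5 * b ^ 2 - b) * (x : ℂ) + (-3 - 4 * a - 10 * b) * (x : ℂ) ^ 2 + 5 * (x : ℂ) ^ 3) *
        iteratedDeriv 2 (fun x' : ℝ => u x' * v x') x +
      ((1 + 4 * b) * (x : ℂ) ^ 2 - 4 * (x : ℂ) ^ 3) *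
        iteratedDeriv 3 (fun x' : ℝ => u x' * v x') x +
      (x : ℂ) ^ 3 * iteratedDeriv 4 (fun x' : ℝ => u x' * v x') x = 0 := by
  have hleibniz (n : ℕ) : iteratedDeriv n (fun y => u y * v y) x = ∑ i ∈ Finset.range (n + 1),
      n.choose i * deriv^[i] u x * deriv^[n - i] v x := by
    simp only [iteratedDeriv_fun_mul (hu.contDiffAt.of_le (mod_cast le_top))
      (hv.contDiffAt.of_le (mod_cast le_top)), iteratedDeriv_eq_iterate]
  have hjet {z : ℂ} {w : ℝ → ℂ} (hw : ContDiff ℝ ∞ w) (h : IsKummerSolution z b w)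
      (k : ℕ) :
      x * deriv^[k + 2] w x + (b + k - x) * deriv^[k + 1] w x - (z + k) * deriv^[k] w x = 0 := by
    simpa only [Function.iterate_succ_apply'] using h.isKummerSolution_iterate_deriv hw k x
  simp only [neg_mul, hleibniz, Nat.reduceAdd, Finset.sum_range_succ, Finset.range_one,
    Finset.sum_singleton, Nat.choose, Nat.cast_one, Function.iterate_zero, id_eq, one_mul,
    tsub_zero, add_zero, tsub_self, Function.iterate_succ,
    Function.comp_apply, Nat.cast_ofNat, Nat.add_one_sub_one, Nat.reduceSub]
  linear_combination kummer_product_relation (by simpa using hjet hu hU 0)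
    (by simpa using hjet hu hU 1) (by simpa using hjet hu hU 2) (by simpa using hjet hv hV 0)
    (by simpa using hjet hv hV 1) (by simpa using hjet hv hV 2)

end IsKummerSolution

theorem kummerM_sq_ODE_general (a b : ℝ) (hb : 0 < b)
    (f : ℝ → ℝ → ℂ)
    (hf : ∀ t x : ℝ, f t x =
      kummerM ((a : ℂ) + t * Complex.I) b x * kummerM ((a : ℂ) - t * Complex.I) b x)
    (t x : ℝ) :
    -4 * (t : ℂ) ^ 2 * (x : ℂ) * f t x +
      (-2 * a * (1 - 3 * b + 2 * (b : ℂ) ^ 2) - 2 * a * (1 - 4 * b) * (x : ℂ)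
          - 4 * a * (x : ℂ) ^ 2) * f t x +
      ((b : ℂ) - 3 * (b : ℂ) ^ 2 + 2 * (b : ℂ) ^ 3
          + (2 * a + b - 8 * a * b - 6 * (b : ℂ) ^ 2) * (x : ℂ)
          + (2 + 8 * a + 6 * b) * (x : ℂ) ^ 2 - 2 * (x : ℂ) ^ 3) *
        iteratedDeriv 1 (fun x' : ℝ => f t x') x +
      ((5 * (b : ℂ) ^ 2 - b) * (x : ℂ) + (-3 - 4 * a - 10 * b) * (x : ℂ) ^ 2
          + 5 * (x : ℂ) ^ 3) *
        iteratedDeriv 2 (fun x' : ℝ => f t x') x +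
      ((1 + 4 * (b : ℂ)) * (x : ℂ) ^ 2 - 4 * (x : ℂ) ^ 3) *
        iteratedDeriv 3 (fun x' : ℝ => f t x') x +
      (x : ℂ) ^ 3 * iteratedDeriv 4 (fun x' : ℝ => f t x') x = 0 := by
  rw [show (fun x' => f t x') = fun x' => kummerM (a + t * I) b x' * kummerM (a - t * I) b x'
    from funext (hf t), hf t x]
  exact IsKummerSolution.fourth_order_mul (contDiff_kummerM hb _) (contDiff_kummerM hb _)
    (isKummerSolution_kummerM hb _) (isKummerSolution_kummerM hb _) x

/-- For `a ≥ b > 0`, the function `f(t,x) = M(a+it,b,x)·M(a-it,b,x)` satisfies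
the fourth-order linear ODE in `x`:
`-4t²x·f + Σ_{k=0}^4 p_k(x)·∂ₓᵏf = 0` with the explicit polynomial
coefficients `p₀,…,p₄`. -/
theorem kummerM_sq_ODE (a b : ℝ) (hb : 0 < b) (hab : b ≤ a)
    (f : ℝ → ℝ → ℂ)
    (hf : ∀ t x : ℝ, f t x =
      kummerM ((a : ℂ) + t * Complex.I) b x * kummerM ((a : ℂ) - t * Complex.I) b x)
    (t x : ℝ) :
    -4 * (t : ℂ) ^ 2 * (x : ℂ) * f t x +
      (-2 * a * (1 - 3 * b + 2 * (b : ℂ) ^ 2) - 2 * a * (1 - 4 * b) * (x : ℂ)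
          - 4 * a * (x : ℂ) ^ 2) * f t x +
      ((b : ℂ) - 3 * (b : ℂ) ^ 2 + 2 * (b : ℂ) ^ 3
          + (2 * a + b - 8 * a * b - 6 * (b : ℂ) ^ 2) * (x : ℂ)
          + (2 + 8 * a + 6 * b) * (x : ℂ) ^ 2 - 2 * (x : ℂ) ^ 3) *
        iteratedDeriv 1 (fun x' : ℝ => f t x') x +
      ((5 * (b : ℂ) ^ 2 - b) * (x : ℂ) + (-3 - 4 * a - 10 * b) * (x : ℂ) ^ 2
          + 5 * (x : ℂ) ^ 3) *
        iteratedDeriv 2 (fun x' : ℝ => f t x') x +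
      ((1 + 4 * (b : ℂ)) * (x : ℂ) ^ 2 - 4 * (x : ℂ) ^ 3) *
        iteratedDeriv 3 (fun x' : ℝ => f t x') x +
      (x : ℂ) ^ 3 * iteratedDeriv 4 (fun x' : ℝ => f t x') x = 0 :=
  kummerM_sq_ODE_general a b hb f hf t x
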